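/- Let n ≥ 5 and let c : Q → Q be any map on the states of the Černý automaton C_n that is not equal to a, not equal to b, and not the identity. Then the DFA C_n^c on alphabet {a,b,c} admits a synchronizing word of length strictly less than (n-1)^2. In other words, for n ≥ 5, C_n admits no non-trivial critical one-symbol extension. -/

import Mathlib

/-- Apply a word (list of transition functions) to a state, left to right. -/
def applyWord {α : Type*} (w : List (α → α)) (q : α) : α :=
  w.foldl (fun s f => f s) q

/-- The Černý symbols on `Fin n` (state `i+1` is index `i`). -/
def cernyA (n : ℕ) [NeZero n] : Fin n → Fin n := fun q => q + 1
def cernyB (n : ℕ) [NeZero n] : Fin n → Fin n := fun q => if q = 0 then 1 else q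

/-- A word over the alphabet `{a, b, c}` of `C_n^c` which synchronizes. -/
def ShortSync (n : ℕ) [NeZero n] (c : Fin n → Fin n) (m : ℕ) : Prop :=
  ∃ w : List (Fin n → Fin n),
    (∀ f ∈ w, f = cernyA n ∨ f = cernyB n ∨ f = c) ∧
    (∃ qs : Fin n, ∀ q : Fin n, applyWord w q = qs) ∧
    w.length < m

/-!
Černý's reset word `b (a^(n-1) b)^(n-2)` is `b` followed by `n - 2` rounds `a^(n-1) b`, each
acting as `x ↦ b (x - 1)`; after `b` and `j` rounds only the states `1, …, n-1-j` are left.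
For every basic extension `c` one of the following gives a shorter reset word.

* `c` merges two states other than `0, 1`: compress `Q` onto a translate of that pair with at
  most `n² - 2n - 1` letters `a, b`, then apply `c`.
* A short word `v` ending in `c` avoids `d` cyclically consecutive states: rotate them to the
  top and finish with `b` and `n - 2 - d` rounds. This applies to `v = c` when `c` misses a
  state other than `0`; to `v = b a^j c` when `c` misses `0` and `j` is the only preimage of
  `1` or of `-1`; and to `v = b a^(β-α) b a^α c` when `α + 2 ≤ β` are the only preimages of
  two consecutive states `w, w + 1` with `1 ≤ w ≤ n - 2`.
* Otherwise the preimages of consecutive states are adjacent, so they walk with a constant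
  step `±1`, and `c` is a rotation `x ↦ x + r`, a reflection `x ↦ e - x`, or `b`. For `r ≥ 2`
  the word `a^(n-1-r) c`, and for a reflection `c a c`, acts like `a^(n-1)` with at most
  `n - 2` letters, which shortens every round.
-/

open Fin.CommRing

section Words

variable {α : Type*}

@[simp] theorem applyWord_nil (q : α) : applyWord ([] : List (α → α)) q = q := rfl

@[simp] theorem applyWord_cons (f : α → α) (w : List (α → α)) (q : α) :
    applyWord (f :: w) q = applyWord w (f q) := rfl

@[simp] theorem applyWord_append (u v : List (α → α)) (q : α) :
    applyWord (u ++ v) q = applyWord v (applyWord u q) :=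
  List.foldl_append

theorem applyWord_replicate (f : α → α) (k : ℕ) (q : α) :
    applyWord (List.replicate k f) q = f^[k] q := by
  induction k generalizing q with
  | zero => rfl
  | succ k ih => exact ih (f q)

theorem applyWord_flatten_replicate (u : List (α → α)) (k : ℕ) (q : α) :
    applyWord (List.replicate k u).flatten q = (applyWord u)^[k] q := by
  induction k generalizing q with
  | zero => rfl
  | succ k ih => rw [List.replicate_succ, List.flatten_cons, applyWord_append, ih]; rfl

end Words

theorem Function.Injective.eq_of_eq_off_fiber {α : Type*} [Finite α] {f g : α → α}
    (hf : Function.Injective f) (hg : Function.Injective g) (y₀ : α)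
    (h : ∀ x, f x ≠ y₀ → f x = g x) : f = g := by
  funext x
  by_contra hx
  have hfx : f x = y₀ := by_contra fun h' => hx (h x h')
  obtain ⟨z, hz⟩ := Finite.injective_iff_surjective.1 hf (g x)
  have hzx : z ≠ x := fun hzx => hx (hzx ▸ hz)
  exact hzx (hg ((h z (hz ▸ fun h' => hx (hfx.trans h'.symm))).symm.trans hz))

theorem exists_eq_add_nsmul_of_steps {G : Type*} [AddCommGroup G] {τ : ℕ → G} {s : G} {L : ℕ}
    (hinj : Set.InjOn τ (Set.Iic L))
    (hstep : ∀ i < L, τ (i + 1) - τ i = s ∨ τ (i + 1) - τ i = -s) :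
    ∃ ε, (ε = s ∨ ε = -s) ∧ ∀ i ≤ L, τ i = τ 0 + i • ε := by
  rcases Nat.eq_zero_or_pos L with rfl | hL
  · exact ⟨s, Or.inl rfl, fun i hi => by simp [Nat.le_zero.1 hi]⟩
  set ε := τ 1 - τ 0
  have hε : ε = s ∨ ε = -s := hstep 0 hL
  -- a step reversing the previous one would revisit a state
  have hconst : ∀ i < L, τ (i + 1) - τ i = ε := by
    intro i
    induction i with
    | zero => exact fun _ => rfl
    | succ i ih =>
      intro hi
      have hpm : τ (i + 2) - τ (i + 1) = ε ∨ τ (i + 2) - τ (i + 1) = -ε := by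
        rcases hε with h | h <;> rcases hstep (i + 1) hi with h' | h' <;> simp [h, h']
      refine hpm.resolve_right fun h => absurd (hinj (show i + 2 ∈ Set.Iic L by simp; omega)
        (show i ∈ Set.Iic L by simp; omega) ?_) (by omega)
      linear_combination (norm := abel) h + ih (by omega)
  refine ⟨ε, hε, fun i => ?_⟩
  induction i with
  | zero => simp
  | succ i ih =>
    intro hi
    rw [succ_nsmul, ← add_assoc, ← ih (by omega), ← hconst i (by omega)]
    abel

namespace Fin

variable {n : ℕ} [NeZero n]

theorem val_one_of_two_le (hn : 2 ≤ n) : (1 : Fin n).val = 1 :=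
  Fin.val_cast_of_lt (by omega : 1 < n)

theorem one_ne_zero_of_two_le (hn : 2 ≤ n) : (1 : Fin n) ≠ 0 := by
  rw [← Fin.val_ne_zero_iff, val_one_of_two_le hn]
  omega

theorem val_sub_natCast {x : Fin n} {k : ℕ} (hk : k ≤ x.val) : (x - k).val = x.val - k := by
  have hkn : (k : Fin n).val = k := Fin.val_cast_of_lt (hk.trans_lt x.isLt)
  rw [Fin.coe_sub_iff_le.2 (by rw [Fin.le_iff_val_le_val, hkn]; exact hk), hkn]

theorem natCast_sub_eq_neg {k : ℕ} (hk : k ≤ n) : ((n - k : ℕ) : Fin n) = -k := by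
  rw [Nat.cast_sub hk, Fin.natCast_self, zero_sub]

theorem val_neg_natCast {k : ℕ} (hk : 0 < k) (hkn : k ≤ n) : (-(k : Fin n)).val = n - k := by
  rw [← natCast_sub_eq_neg hkn, Fin.val_cast_of_lt (by omega)]

theorem val_neg_one_of_two_le (hn : 2 ≤ n) : (-1 : Fin n).val = n - 1 := by
  simpa using val_neg_natCast (n := n) Nat.one_pos (by omega)

theorem eq_neg_one_iff (hn : 2 ≤ n) {x : Fin n} : x = -1 ↔ x.val = n - 1 := by
  rw [Fin.ext_iff, val_neg_one_of_two_le hn]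

theorem sub_eq_one_or_neg_one_or_apart (hn : 2 ≤ n) {α β : Fin n} (hαβ : α ≠ β) :
    β - α = 1 ∨ β - α = -1 ∨ α.val + 2 ≤ β.val ∨ β.val + 2 ≤ α.val := by
  have hv : α.val ≠ β.val := fun h => hαβ (Fin.ext h)
  by_cases h1 : β.val = α.val + 1
  · left
    apply Fin.ext
    rw [Fin.coe_sub_iff_le.2 (Fin.le_iff_val_le_val.2 (by omega)), val_one_of_two_le hn]
    omega
  by_cases h2 : α.val = β.val + 1
  · right; left
    have : α - β = 1 := Fin.ext (by
      rw [Fin.coe_sub_iff_le.2 (Fin.le_iff_val_le_val.2 (by omega)), val_one_of_two_le hn]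
      omega)
    linear_combination -this
  omega

end Fin

namespace Cerny

open Fin

variable {n : ℕ} [NeZero n]

theorem cernyA_iterate (k : ℕ) (q : Fin n) : (cernyA n)^[k] q = q + k := by
  induction k with
  | zero => simp
  | succ k ih => rw [Function.iterate_succ_apply', ih, cernyA, Nat.cast_succ, add_assoc]

theorem cernyB_ne_zero (hn : 2 ≤ n) (q : Fin n) : cernyB n q ≠ 0 := by
  unfold cernyB
  split_ifs with h
  · exact one_ne_zero_of_two_le hn
  · exact h

/-- The action of one round `a^(n-1) b`. -/
def cernyRound (n : ℕ) [NeZero n] (x : Fin n) : Fin n := cernyB n (x - 1)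

theorem cernyRound_one : cernyRound n 1 = 1 := by simp [cernyRound, cernyB]

theorem cernyRound_of_two_le {x : Fin n} (hx : 2 ≤ x.val) : cernyRound n x = x - 1 := by
  have hx0 : x ≠ 0 := fun h => by simp [h] at hx
  have : x - 1 ≠ 0 := fun h => by
    have := val_sub_one_of_ne_zero hx0
    simp [h] at this
    omega
  simp [cernyRound, cernyB, this]

theorem cernyRound_iterate (hn : 2 ≤ n) (j : ℕ) {x : Fin n} (hx : x ≠ 0) :
    (cernyRound n)^[j] x = if x.val ≤ j + 1 then 1 else x - j := by
  have hx' := Fin.val_ne_zero_iff.2 hx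
  induction j generalizing x with
  | zero =>
    rw [Function.iterate_zero_apply]
    split_ifs with h
    · exact Fin.ext (by rw [val_one_of_two_le hn]; omega)
    · simp
  | succ j ih =>
    rw [Function.iterate_succ_apply]
    by_cases hx1 : x.val < 2
    · obtain rfl : x = 1 := Fin.ext (by rw [val_one_of_two_le hn]; omega)
      rw [cernyRound_one, ih (one_ne_zero_of_two_le hn) (by rw [val_one_of_two_le hn]; omega),
        if_pos (by omega), if_pos (by omega)]
    · have hx1' := val_sub_one_of_ne_zero hx
      have hx0 : x - 1 ≠ 0 := fun h => by simp [h] at hx1'; omega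
      rw [cernyRound_of_two_le (by omega), ih hx0 (by omega), hx1']
      split_ifs <;> first | rfl | omega | (push_cast; ring)

def powA (n : ℕ) [NeZero n] (k : ℕ) : List (Fin n → Fin n) := List.replicate k (cernyA n)

def compressWord (r : List (Fin n → Fin n)) (j : ℕ) : List (Fin n → Fin n) :=
  cernyB n :: (List.replicate j (r ++ [cernyB n])).flatten

/-- `b (a^(n-1) b)^j`; for `j = n - 2` this is Černý's reset word of length `(n-1)^2`. -/
def cernyCompress (n : ℕ) [NeZero n] (j : ℕ) : List (Fin n → Fin n) :=
  compressWord (powA n (n - 1)) j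

def alphabet (c : Fin n → Fin n) : List (Fin n → Fin n) := [cernyA n, cernyB n, c]

theorem applyWord_powA (k : ℕ) (q : Fin n) : applyWord (powA n k) q = q + k := by
  rw [powA, applyWord_replicate, cernyA_iterate]

theorem applyWord_powA_pred (x : Fin n) : applyWord (powA n (n - 1)) x = x - 1 := by
  rw [applyWord_powA, natCast_sub_eq_neg (NeZero.pos n), Nat.cast_one, sub_eq_add_neg]

theorem applyWord_compressWord (hn : 2 ≤ n) {r : List (Fin n → Fin n)}
    (hr : ∀ x, applyWord r x = x - 1) (j : ℕ) (q : Fin n) :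
    applyWord (compressWord r j) q = if q.val ≤ j + 1 then 1 else q - j := by
  have hround : applyWord (r ++ [cernyB n]) = cernyRound n := funext fun x => by
    rw [applyWord_append, hr]; rfl
  rw [compressWord, applyWord_cons, applyWord_flatten_replicate, hround,
    cernyRound_iterate hn j (cernyB_ne_zero hn q)]
  by_cases hq : q = 0
  · subst hq
    rw [show cernyB n 0 = 1 from if_pos rfl, val_one_of_two_le hn, if_pos (by omega),
      if_pos (by simp)]
  · rw [show cernyB n q = q from if_neg hq]

theorem applyWord_cernyCompress (hn : 2 ≤ n) (j : ℕ) (q : Fin n) :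
    applyWord (cernyCompress n j) q = if q.val ≤ j + 1 then 1 else q - j :=
  applyWord_compressWord hn applyWord_powA_pred j q

@[simp] theorem length_powA (k : ℕ) : (powA n k).length = k := List.length_replicate

theorem length_compressWord (r : List (Fin n → Fin n)) (j : ℕ) :
    (compressWord r j).length = 1 + j * (r.length + 1) := by
  simp [compressWord]
  ring

theorem length_cernyCompress (j : ℕ) : (cernyCompress n j).length = 1 + j * n := by
  rw [cernyCompress, length_compressWord, length_powA, Nat.sub_add_cancel (NeZero.pos n)]

@[simp] theorem cernyB_mem_alphabet (c : Fin n → Fin n) : cernyB n ∈ alphabet c := by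
  simp [alphabet]

@[simp] theorem mem_alphabet (c : Fin n → Fin n) : c ∈ alphabet c := by simp [alphabet]

@[simp] theorem powA_subset (c : Fin n → Fin n) (k : ℕ) : powA n k ⊆ alphabet c :=
  List.replicate_subset.2 (Or.inr (by simp [alphabet]))

@[simp] theorem compressWord_subset {c : Fin n → Fin n} {r : List (Fin n → Fin n)}
    (hr : r ⊆ alphabet c) (j : ℕ) : compressWord r j ⊆ alphabet c := by
  intro f hf
  simp only [compressWord, List.mem_cons, List.mem_flatten, List.mem_replicate] at hf
  rcases hf with rfl | ⟨l, ⟨-, rfl⟩, hf⟩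
  · simp
  · simp only [List.mem_append, List.mem_singleton] at hf
    rcases hf with hf | rfl
    · exact hr hf
    · simp

@[simp] theorem cernyCompress_subset (c : Fin n → Fin n) (j : ℕ) :
    cernyCompress n j ⊆ alphabet c :=
  compressWord_subset (powA_subset c _) j

theorem shortSync_of_reset {c : Fin n → Fin n} {w : List (Fin n → Fin n)}
    (hw : w ⊆ alphabet c) (q₀ : Fin n) (hq : ∀ q, applyWord w q = q₀) {m : ℕ}
    (hlen : w.length < m) : ShortSync n c m :=
  ⟨w, fun f hf => by simpa [alphabet] using hw hf, ⟨q₀, hq⟩, hlen⟩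

theorem shortSync_of_pred (hn : 3 ≤ n) {c : Fin n → Fin n} {r : List (Fin n → Fin n)}
    (hsub : r ⊆ alphabet c) (hr : ∀ x, applyWord r x = x - 1) (hlen : r.length + 2 ≤ n) :
    ShortSync n c ((n - 1) ^ 2) := by
  refine shortSync_of_reset (compressWord_subset hsub (n - 2)) 1 (fun q => ?_) ?_
  · rw [applyWord_compressWord (by omega) hr, if_pos (by omega)]
  · rw [length_compressWord]
    obtain ⟨e, rfl⟩ : ∃ e, n = e + 3 := ⟨n - 3, by omega⟩
    simp only [show e + 3 - 2 = e + 1 by omega, show e + 3 - 1 = e + 2 by omega]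
    nlinarith

/-- Rotating the avoided states `m, …, m + d - 1` to the top leaves only `0, …, n - 1 - d`,
which `b` and `n - 2 - d` rounds synchronize. -/
theorem shortSync_of_avoid {c : Fin n → Fin n} {v : List (Fin n → Fin n)}
    (hv : v ⊆ alphabet c) (m : Fin n) {d k : ℕ} (hd : d + 2 ≤ n) (hk : m + k + d = 0)
    (havoid : ∀ q, ∀ i < d, applyWord v q ≠ m + i) (hlen : v.length + k < d * n) :
    ShortSync n c ((n - 1) ^ 2) := by
  refine shortSync_of_reset (w := v ++ powA n k ++ cernyCompress n (n - 2 - d))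
    (by simp [hv]) 1 (fun q => ?_) ?_
  · rw [applyWord_append, applyWord_append, applyWord_powA, applyWord_cernyCompress (by omega),
      if_pos]
    set y := applyWord v q + k with hy
    by_contra! hyn
    refine havoid q (y.val + d - n) (by have := y.isLt; omega) ?_
    have : ((y.val + d - n : ℕ) : Fin n) = y + d := by
      rw [Nat.cast_sub (by omega), Fin.natCast_self, sub_zero, Nat.cast_add, Fin.cast_val_eq_self]
    rw [this, hy]
    linear_combination -hk
  · simp only [List.length_append, length_powA, length_cernyCompress]
    obtain ⟨e, rfl⟩ : ∃ e, n = e + d + 2 := ⟨n - d - 2, by omega⟩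
    simp only [show e + d + 2 - 2 - d = e by omega, show e + d + 2 - 1 = e + d + 1 by omega]
    nlinarith

theorem shortSync_of_merge_succ (hn : 3 ≤ n) {c : Fin n → Fin n} {p : Fin n} (hp : p ≠ 0)
    (hc : c p = c (p + 1)) : ShortSync n c ((n - 1) ^ 2) := by
  have hp1 := Fin.val_ne_zero_iff.2 hp
  refine shortSync_of_reset (w := cernyCompress n (n - 3) ++ powA n (p.val - 1) ++ [c])
    (by simp) (c p) (fun q => ?_) ?_
  · have hpk : ((p.val - 1 : ℕ) : Fin n) = p - 1 := by
      rw [Nat.cast_sub (by omega), Fin.cast_val_eq_self, Nat.cast_one]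
    rw [applyWord_append, applyWord_append, applyWord_powA, applyWord_cernyCompress (by omega),
      hpk, applyWord_cons, applyWord_nil]
    -- after `n - 3` rounds only the states `1` and `2` are left
    split_ifs with hq
    · ring_nf
    · have hq1 : q = -1 := (eq_neg_one_iff (by omega)).2 (by have := q.isLt; omega)
      rw [hq1, natCast_sub_eq_neg (by omega), hc]
      ring_nf
  · simp only [List.length_append, length_cernyCompress, length_powA, List.length_singleton]
    have := p.isLt
    obtain ⟨e, rfl⟩ : ∃ e, n = e + 3 := ⟨n - 3, by omega⟩
    simp only [show e + 3 - 3 = e by omega, show e + 3 - 1 = e + 2 by omega]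
    nlinarith [show p.val - 1 ≤ e + 1 by omega]

def pairWord (n : ℕ) [NeZero n] (d : ℕ) : List (Fin n → Fin n) :=
  cernyCompress n (n - 2 - d) ++ powA n (n - 2) ++ cernyCompress n (d - 2)

/-- The first `n - 2 - d` rounds leave `1, …, d + 1`; `a^(n-2)` moves `1` to `-1` and the
others to `0, …, d - 1`, which `b` and `d - 2` further rounds collapse to `1` while `-1` only
drifts down to `1 - d`. -/
theorem applyWord_pairWord {d : ℕ} (hd : 2 ≤ d) (hdn : d + 2 ≤ n) (q : Fin n) :
    applyWord (pairWord n d) q = 1 ∨ applyWord (pairWord n d) q = 1 - d := by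
  have hn : 2 ≤ n := by omega
  rw [pairWord, applyWord_append, applyWord_append, applyWord_powA, natCast_sub_eq_neg hn,
    applyWord_cernyCompress hn, applyWord_cernyCompress hn]
  set z := if q.val ≤ n - 2 - d + 1 then 1 else q - ↑(n - 2 - d)
  have hz : z = 1 ∨ (2 ≤ z.val ∧ z.val ≤ d + 1) := by
    simp only [z]
    split_ifs with hq
    · exact Or.inl rfl
    · have := q.isLt
      rw [val_sub_natCast (by omega)]
      omega
  rcases hz with hz | ⟨hz2, hzd⟩
  · right
    have : z + -((2 : ℕ) : Fin n) = -1 := by rw [hz]; push_cast; ring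
    rw [this, val_neg_one_of_two_le hn, if_neg (by omega), Nat.cast_sub hd]
    ring
  · left
    rw [← sub_eq_add_neg, val_sub_natCast hz2, if_pos (by omega)]

theorem length_pairWord {d : ℕ} (hd : 2 ≤ d) (hdn : d + 2 ≤ n) :
    (pairWord n d).length + 3 * n = n * n := by
  simp only [pairWord, List.length_append, length_cernyCompress, length_powA]
  obtain ⟨e, rfl⟩ : ∃ e, n = e + d + 2 := ⟨n - d - 2, by omega⟩
  obtain ⟨f, rfl⟩ : ∃ f, d = f + 2 := ⟨d - 2, by omega⟩
  simp only [Nat.add_sub_cancel]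
  ring

theorem shortSync_of_merge_apart {c : Fin n → Fin n} {x y : Fin n}
    (hd : 2 ≤ (y - x).val) (hd' : (y - x).val + 2 ≤ n) (hc : c x = c y) :
    ShortSync n c ((n - 1) ^ 2) := by
  refine shortSync_of_reset (w := pairWord n (y - x).val ++ powA n (y - 1).val ++ [c])
    (by simp [pairWord]) (c y) (fun q => ?_) ?_
  · rw [applyWord_append, applyWord_append, applyWord_powA, Fin.cast_val_eq_self,
      applyWord_cons, applyWord_nil]
    rcases applyWord_pairWord hd hd' q with h | h <;> rw [h]
    · ring_nf
    · rw [← hc, Fin.cast_val_eq_self]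
      ring_nf
  · simp only [List.length_append, length_powA, List.length_singleton]
    have := (y - 1).isLt
    have := length_pairWord hd hd'
    obtain ⟨e, rfl⟩ : ∃ e, n = e + 1 := ⟨n - 1, by omega⟩
    simp only [Nat.add_sub_cancel]
    nlinarith

theorem shortSync_of_merge (hn : 3 ≤ n) {c : Fin n → Fin n} {x y : Fin n} (hxy : x ≠ y)
    (hc : c x = c y) (hxy01 : ({x, y} : Set (Fin n)) ≠ {0, 1}) :
    ShortSync n c ((n - 1) ^ 2) := by
  have hn2 : 2 ≤ n := by omega
  rw [Ne, Set.pair_eq_pair_iff, not_or] at hxy01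
  obtain ⟨h01, h10⟩ := hxy01
  have hd0 : (y - x).val ≠ 0 := Fin.val_ne_zero_iff.2 (sub_ne_zero.2 hxy.symm)
  have hdn := (y - x).isLt
  by_cases h1 : (y - x).val = 1
  · have hy : y = x + 1 := by
      have : y - x = 1 := Fin.ext (by rw [h1, val_one_of_two_le hn2])
      linear_combination this
    exact shortSync_of_merge_succ hn (fun hx => h01 ⟨hx, by rw [hy, hx, zero_add]⟩) (hy ▸ hc)
  by_cases h2 : (y - x).val = n - 1
  · have hx : x = y + 1 := by
      have : y - x = -1 := (eq_neg_one_iff hn2).2 h2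
      linear_combination -this
    exact shortSync_of_merge_succ hn (fun hy => h10 ⟨by rw [hx, hy, zero_add], hy⟩)
      (hx ▸ hc.symm)
  exact shortSync_of_merge_apart (by omega) (by omega) hc

theorem shortSync_of_not_mem_range (hn : 3 ≤ n) {c : Fin n → Fin n} {m : Fin n} (hm : m ≠ 0)
    (hmc : m ∉ Set.range c) : ShortSync n c ((n - 1) ^ 2) := by
  have hm1 := Fin.val_ne_zero_iff.2 hm
  have hmn := m.isLt
  refine shortSync_of_avoid (v := [c]) (by simp) m (d := 1) (k := n - (m.val + 1)) (by omega)
    ?_ (fun q i hi => ?_) (by simp; omega)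
  · rw [natCast_sub_eq_neg (by omega)]
    push_cast [Fin.cast_val_eq_self]
    ring
  · obtain rfl : i = 0 := by omega
    simpa using fun h => hmc ⟨q, h⟩

theorem applyWord_cernyB_powA_ne (hn : 2 ≤ n) (j : ℕ) (q : Fin n) :
    applyWord (cernyB n :: powA n j) q ≠ j := by
  rw [applyWord_cons, applyWord_powA]
  exact fun h => cernyB_ne_zero hn q (by linear_combination h)

def avoidPairWord (α β : Fin n) : List (Fin n → Fin n) :=
  cernyB n :: powA n (β.val - α.val) ++ cernyB n :: powA n α.val

theorem applyWord_avoidPairWord (hn : 2 ≤ n) {α β : Fin n} (hαβ : α.val + 2 ≤ β.val)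
    (q : Fin n) :
    applyWord (avoidPairWord α β) q ≠ α ∧ applyWord (avoidPairWord α β) q ≠ β := by
  set t := β.val - α.val
  have ht : (t : Fin n).val = t := Fin.val_cast_of_lt (by have := β.isLt; omega)
  have hy := applyWord_cernyB_powA_ne hn t q
  rw [avoidPairWord, applyWord_append, applyWord_cons]
  generalize applyWord (cernyB n :: powA n t) q = y at hy
  have hb0 := cernyB_ne_zero hn y
  have hbt : cernyB n y ≠ t := by
    unfold cernyB
    split_ifs
    · exact fun h => by have := congrArg Fin.val h; rw [val_one_of_two_le hn, ht] at this; omega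
    · exact hy
  have hβ : β = t + α := by
    rw [← Fin.cast_val_eq_self β, ← Fin.cast_val_eq_self α, ← Nat.cast_add]
    congr 1
    omega
  rw [applyWord_powA, Fin.cast_val_eq_self, hβ]
  exact ⟨fun h => hb0 (by linear_combination h), fun h => hbt (by linear_combination h)⟩

theorem shortSync_of_preimage_subset_singleton (hn : 4 ≤ n) {c : Fin n → Fin n} (m j : Fin n)
    {k : ℕ} (hk : m + k + 2 = 0) (hj : c ⁻¹' {m, m + 1} ⊆ {j})
    (hlen : j.val + k + 2 < 2 * n) :
    ShortSync n c ((n - 1) ^ 2) := by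
  refine shortSync_of_avoid (v := cernyB n :: powA n j.val ++ [c]) (by simp) m (d := 2) hn
    (by exact_mod_cast hk) (fun q i hi h => ?_) (by simp; omega)
  have hne := applyWord_cernyB_powA_ne (by omega) j.val q
  rw [Fin.cast_val_eq_self] at hne
  refine hne (hj ?_)
  interval_cases i <;> simp at h <;> simp [h]

theorem shortSync_of_preimage_subset_pair (hn : 4 ≤ n) {c : Fin n → Fin n} {w α β : Fin n}
    (hw : w ≠ 0) (hw' : w.val + 2 ≤ n) (hαβ : α.val + 2 ≤ β.val)
    (hpre : c ⁻¹' {w, w + 1} ⊆ {α, β}) : ShortSync n c ((n - 1) ^ 2) := by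
  have hw1 := Fin.val_ne_zero_iff.2 hw
  have := β.isLt
  refine shortSync_of_avoid (v := avoidPairWord α β ++ [c]) (by simp [avoidPairWord]) w
    (d := 2) (k := n - (w.val + 2)) hn ?_ (fun q i hi h => ?_) (by simp [avoidPairWord]; omega)
  · rw [natCast_sub_eq_neg (by omega)]
    push_cast [Fin.cast_val_eq_self]
    ring
  · obtain ⟨h1, h2⟩ := applyWord_avoidPairWord (by omega) hαβ q
    have hmem : applyWord (avoidPairWord α β) q ∈ c ⁻¹' {w, w + 1} := by
      rw [applyWord_append, applyWord_cons, applyWord_nil] at h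
      interval_cases i <;> simp [h]
    rcases hpre hmem with h' | h'
    exacts [h1 h', h2 h']

theorem shortSync_of_rotation {c : Fin n → Fin n} {r : Fin n} (hr : 2 ≤ r.val)
    (hc : ∀ x, c x = x + r) : ShortSync n c ((n - 1) ^ 2) := by
  have := r.isLt
  refine shortSync_of_pred (r := powA n (n - (r.val + 1)) ++ [c]) (by omega) (by simp)
    (fun x => ?_) (by simp; omega)
  rw [applyWord_append, applyWord_powA, applyWord_cons, applyWord_nil, hc,
    natCast_sub_eq_neg (by omega)]
  push_cast [Fin.cast_val_eq_self]
  ring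

theorem shortSync_of_reflection (hn : 5 ≤ n) {c : Fin n → Fin n} (e : Fin n)
    (hc : ∀ x, c x = e - x) : ShortSync n c ((n - 1) ^ 2) := by
  refine shortSync_of_pred (r := [c, cernyA n, c]) (by omega) (by simp [alphabet])
    (fun x => ?_) (by simp; omega)
  simp only [applyWord_cons, applyWord_nil, hc, cernyA]
  ring

theorem preimage_succ_sub_eq_one_or_neg_one (hn : 4 ≤ n) {c : Fin n → Fin n}
    (hns : ¬ShortSync n c ((n - 1) ^ 2)) (σ : Fin n → Fin n) {w : Fin n} (hw : w ≠ 0)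
    (hw' : w.val + 2 ≤ n) (hσw : ∀ x, c x = w ↔ x = σ w)
    (hσw1 : ∀ x, c x = w + 1 ↔ x = σ (w + 1)) :
    σ (w + 1) - σ w = 1 ∨ σ (w + 1) - σ w = -1 := by
  have hne : σ w ≠ σ (w + 1) := fun h => by
    have := ((hσw _).2 rfl).symm.trans (h ▸ (hσw1 _).2 rfl)
    simp at this
    omega
  have hpre : c ⁻¹' {w, w + 1} ⊆ {σ w, σ (w + 1)} := by
    rintro x (hx | hx)
    exacts [Or.inl ((hσw x).1 hx), Or.inr ((hσw1 x).1 hx)]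
  rcases sub_eq_one_or_neg_one_or_apart (by omega) hne with h | h | h | h
  · exact Or.inl h
  · exact Or.inr h
  · exact (hns (shortSync_of_preimage_subset_pair hn hw hw' h hpre)).elim
  · exact (hns (shortSync_of_preimage_subset_pair hn hw hw' h
      (Set.pair_comm (σ w) _ ▸ hpre))).elim

theorem preimage_eq_of_not_shortSync (hn : 4 ≤ n) {c : Fin n → Fin n}
    (hns : ¬ShortSync n c ((n - 1) ^ 2)) (σ : Fin n → Fin n) {w₀ : ℕ} (hw₀ : 1 ≤ w₀)
    (hw₀n : w₀ < n) (hσ : ∀ w : Fin n, w₀ ≤ w.val → ∀ x, c x = w ↔ x = σ w) :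
    ∃ ε : Fin n, (ε = 1 ∨ ε = -1) ∧
      ∀ w : Fin n, w₀ ≤ w.val → σ w = σ w₀ + (w - w₀) * ε := by
  have hval : ∀ i, w₀ + i < n → ((w₀ + i : ℕ) : Fin n).val = w₀ + i := fun i h =>
    Fin.val_cast_of_lt h
  have hinj : Set.InjOn (fun i : ℕ => σ (w₀ + i : ℕ)) (Set.Iic (n - 1 - w₀)) := by
    intro i hi j hj h
    simp only [Set.mem_Iic] at hi hj
    have hcσ : ∀ i, w₀ + i < n → c (σ (w₀ + i : ℕ)) = (w₀ + i : ℕ) := fun i h =>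
      (hσ _ (by rw [hval i h]; omega) _).2 rfl
    have := congrArg Fin.val
      ((hcσ i (by omega)).symm.trans ((congrArg c h).trans (hcσ j (by omega))))
    rw [hval i (by omega), hval j (by omega)] at this
    omega
  have hstep : ∀ i < n - 1 - w₀, σ (w₀ + (i + 1) : ℕ) - σ (w₀ + i : ℕ) = 1 ∨
      σ (w₀ + (i + 1) : ℕ) - σ (w₀ + i : ℕ) = -1 := by
    intro i hi
    have hw := hval i (by omega)
    have hw1 : (((w₀ + i : ℕ) : Fin n) + 1).val = w₀ + i + 1 := by
      rw [Fin.val_add_eq_ite, val_one_of_two_le (by omega), hw, if_neg (by omega)]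
    rw [← add_assoc, Nat.cast_succ]
    exact preimage_succ_sub_eq_one_or_neg_one hn hns σ (Fin.val_ne_zero_iff.1 (by omega))
      (by omega) (hσ _ (by omega)) (hσ _ (by omega))
  obtain ⟨ε, hε, hτ⟩ := exists_eq_add_nsmul_of_steps hinj hstep
  refine ⟨ε, hε, fun w hw => ?_⟩
  have := hτ (w.val - w₀) (by omega)
  simp only [Nat.add_sub_cancel' hw, Fin.cast_val_eq_self, add_zero, nsmul_eq_mul] at this
  rw [this, Nat.cast_sub hw, Fin.cast_val_eq_self]

theorem shortSync_of_injective (hn : 5 ≤ n) {c : Fin n → Fin n} (hinj : Function.Injective c)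
    (hca : c ≠ cernyA n) (hcid : c ≠ id) : ShortSync n c ((n - 1) ^ 2) := by
  by_contra hns
  let e := Equiv.ofBijective c hinj.bijective_of_finite
  obtain ⟨ε, hε, hσ⟩ := preimage_eq_of_not_shortSync (by omega) hns e.symm le_rfl (by omega)
    fun w _ x => e.eq_symm_apply.symm
  simp only [Nat.cast_one] at hσ
  have hc : ∀ x, c x ≠ 0 → x = e.symm 1 + (c x - 1) * ε := fun x hx => by
    rw [← hσ (c x) (Nat.one_le_iff_ne_zero.2 (Fin.val_ne_zero_iff.2 hx))]
    exact (e.symm_apply_apply x).symm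
  rcases hε with rfl | rfl
  · set r := 1 - e.symm 1
    have hrot : c = (· + r) := hinj.eq_of_eq_off_fiber (add_left_injective r) 0 fun x hx => by
      linear_combination -hc x hx
    have hr0 : r ≠ 0 := fun h => hcid (by rw [hrot, h]; funext x; simp)
    have hr1 : r ≠ 1 := fun h => hca (by rw [hrot, h]; rfl)
    have hr1' : r.val ≠ 1 := fun h => hr1 (Fin.ext (by rw [h, val_one_of_two_le (by omega)]))
    have := Fin.val_ne_zero_iff.2 hr0
    exact hns (shortSync_of_rotation (r := r) (by omega) fun x => by rw [hrot])
  · have hrefl : c = (e.symm 1 + 1 - ·) := hinj.eq_of_eq_off_fiber sub_right_injective 0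
      fun x hx => by linear_combination hc x hx
    exact hns (shortSync_of_reflection hn _ fun x => by rw [hrefl])

theorem eq_cernyB_of_fix (hn : 2 ≤ n) {c : Fin n → Fin n} (hc0 : c 0 = 1) (hc1 : c 1 = 1)
    (hfix : ∀ x : Fin n, 2 ≤ x.val → c x = x) : c = cernyB n := by
  funext x
  by_cases hx0 : x = 0
  · rw [hx0, hc0]
    rfl
  by_cases hx1 : x = 1
  · rw [hx1, hc1]
    exact (if_neg (one_ne_zero_of_two_le hn)).symm
  rw [hfix x, cernyB, if_neg hx0]
  have := Fin.val_ne_zero_iff.2 hx0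
  have : x.val ≠ 1 := fun h => hx1 (Fin.ext (by rw [h, val_one_of_two_le hn]))
  omega

theorem shortSync_of_fix_one_neg_one (hn : 4 ≤ n) {c : Fin n → Fin n} (hcb : c ≠ cernyB n)
    (hc0 : c 0 = 1) (hc1 : c 1 = 1) (hctop : c (-1) = -1) (hinj : Set.InjOn c {0}ᶜ)
    (hrange : {0}ᶜ ⊆ Set.range c) : ShortSync n c ((n - 1) ^ 2) := by
  by_contra hns
  have hn2 : 2 ≤ n := by omega
  have hne : ∀ w : Fin n, 2 ≤ w.val → ∀ x, c x = w → x ≠ 0 := fun w hw x hx h0 => by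
    rw [h0, hc0] at hx
    rw [← hx, val_one_of_two_le hn2] at hw
    omega
  have hσ : ∀ w : Fin n, 2 ≤ w.val → ∀ x, c x = w ↔ x = Function.invFun c w := by
    intro w hw x
    have hσw := Function.invFun_eq (hrange (Fin.val_ne_zero_iff.1 (by omega) : w ≠ 0))
    refine ⟨fun hx => hinj (hne w hw x hx) (hne w hw _ hσw) (hx.trans hσw.symm), ?_⟩
    rintro rfl
    exact hσw
  obtain ⟨ε, hε, hσε⟩ :=
    preimage_eq_of_not_shortSync hn hns _ (w₀ := 2) (by norm_num) (by omega) hσ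
  have hσtop := hσε (-1) (by rw [val_neg_one_of_two_le hn2]; omega)
  rw [← (hσ (-1) (by rw [val_neg_one_of_two_le hn2]; omega) (-1)).1 hctop] at hσtop
  rcases hε with rfl | rfl
  · refine hcb (eq_cernyB_of_fix hn2 hc0 hc1 fun w hw => ?_)
    rw [hσ w hw, hσε w hw]
    linear_combination hσtop
  · -- the preimage of `-2` would be `0`, but `c 0 = 1`
    have hv2 : (-((2 : ℕ) : Fin n)).val = n - 2 := val_neg_natCast (by omega) (by omega)
    have h0 : Function.invFun c (-((2 : ℕ) : Fin n)) = 0 := by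
      rw [hσε _ (by omega)]
      linear_combination -hσtop
    have := congrArg Fin.val (hc0.symm.trans ((hσ _ (by omega) 0).2 h0.symm))
    rw [val_one_of_two_le hn2, hv2] at this
    omega

theorem shortSync_of_range_eq_compl_zero (hn : 4 ≤ n) {c : Fin n → Fin n}
    (hcb : c ≠ cernyB n) (h01 : c 0 = c 1) (hinj : Set.InjOn c {0}ᶜ)
    (hrange : Set.range c = {0}ᶜ) : ShortSync n c ((n - 1) ^ 2) := by
  have hn2 : 2 ≤ n := by omega
  have h0 : ∀ x, c x ≠ 0 := fun x =>
    (hrange ▸ Set.mem_range_self x : c x ∈ ({0}ᶜ : Set (Fin n)))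
  have huniq : ∀ x y, c x = c y → c x ≠ c 0 → x = y := fun x y hxy hx =>
    hinj (fun h => hx (h ▸ rfl)) (fun h => hx (hxy.trans (h ▸ rfl))) hxy
  by_cases hc0 : c 0 = 1
  · by_cases hctop : c (-1) = -1
    · exact shortSync_of_fix_one_neg_one hn hcb hc0 (h01 ▸ hc0) hctop hinj hrange.ge
    have hn1 : (-1 : Fin n) ≠ 1 := fun h => by
      have := congrArg Fin.val h
      rw [val_neg_one_of_two_le hn2, val_one_of_two_le hn2] at this
      omega
    obtain ⟨j, hj⟩ := hrange.ge (fun h => one_ne_zero_of_two_le hn2 (neg_eq_zero.1 h) :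
      (-1 : Fin n) ≠ 0)
    have hjv : j.val + 2 ≤ n := by
      have := j.isLt
      have : j.val ≠ n - 1 := fun h => hctop ((eq_neg_one_iff hn2).2 h ▸ hj)
      omega
    refine shortSync_of_preimage_subset_singleton hn (-1) j (k := n - 1) ?_ ?_ (by omega)
    · rw [natCast_sub_eq_neg (by omega)]
      ring
    · rintro x (hx | hx)
      · exact huniq x j (hx.trans hj.symm) (by rw [hx, hc0]; exact hn1)
      · exact absurd (by simpa using hx) (h0 x)
  · obtain ⟨j, hj⟩ := hrange.ge (one_ne_zero_of_two_le hn2 : (1 : Fin n) ≠ 0)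
    refine shortSync_of_preimage_subset_singleton hn 0 j (k := n - 2) ?_ ?_
      (by have := j.isLt; omega)
    · rw [natCast_sub_eq_neg (by omega)]
      push_cast
      ring
    · rintro x (hx | hx)
      · exact absurd hx (h0 x)
      · rw [Set.mem_singleton_iff, zero_add] at hx
        exact huniq x j (hx.trans hj.symm) (by rw [hx]; exact Ne.symm hc0)

theorem shortSync_of_merge_zero_one (hn : 4 ≤ n) {c : Fin n → Fin n} (hcb : c ≠ cernyB n)
    (h01 : c 0 = c 1) (hinj : Set.InjOn c {0}ᶜ) : ShortSync n c ((n - 1) ^ 2) := by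
  by_cases hm : ∃ m ≠ 0, m ∉ Set.range c
  · obtain ⟨m, hm0, hmc⟩ := hm
    exact shortSync_of_not_mem_range (by omega) hm0 hmc
  push Not at hm
  refine shortSync_of_range_eq_compl_zero hn hcb h01 hinj
    (Set.Subset.antisymm (fun y ⟨x, hx⟩ hy => ?_) fun y hy => hm y hy)
  -- otherwise `c` would be surjective, hence injective, contradicting `c 0 = c 1`
  have hsurj : Function.Surjective c := fun z => by
    by_cases hz : z = 0
    · exact ⟨x, hx.trans (hy.trans hz.symm)⟩
    · exact hm z hz
  exact one_ne_zero_of_two_le (by omega) (Finite.injective_iff_surjective.2 hsurj h01).symm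

end Cerny

/-- for n ≥ 5, any basic one-symbol extension of the Černý automaton
`C_n` by a map `c` (not equal to `a`, nor `b`, nor the identity) admits a
synchronizing word of length strictly less than `(n-1)²`: `C_n` has no non-trivial
critical one-symbol extension. -/
theorem cerny_no_critical_extension (n : ℕ) (hn : 5 ≤ n) [NeZero n]
    (c : Fin n → Fin n) (hca : c ≠ cernyA n) (hcb : c ≠ cernyB n) (hcid : c ≠ id) :
    ShortSync n c ((n - 1) ^ 2) := by
  by_cases hmerge : ∃ x y, x ≠ y ∧ c x = c y ∧ ({x, y} : Set (Fin n)) ≠ {0, 1}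
  · obtain ⟨x, y, hxy, hc, h01⟩ := hmerge
    exact Cerny.shortSync_of_merge (by omega) hxy hc h01
  push Not at hmerge
  by_cases hinj : Function.Injective c
  · exact Cerny.shortSync_of_injective hn hinj hca hcid
  obtain ⟨x, y, hc, hxy⟩ := Function.not_injective_iff.1 hinj
  refine Cerny.shortSync_of_merge_zero_one (by omega) hcb ?_ fun x hx y hy hc => ?_
  · rcases Set.pair_eq_pair_iff.1 (hmerge x y hxy hc) with ⟨rfl, rfl⟩ | ⟨rfl, rfl⟩
    exacts [hc, hc.symm]
  · by_contra hxy
    rcases Set.pair_eq_pair_iff.1 (hmerge x y hxy hc) with ⟨rfl, -⟩ | ⟨-, rfl⟩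
    exacts [hx rfl, hy rfl]
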